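/- arXiv:2308.02484 — 2 statements merged into one kernel-verified Lean document; each statement's English description precedes it below -/
import Mathlib

section
/- For the indirect adaptive law θ(t+1) = θ(t) − Γ ∑ᵢ εᵢ(t) ζᵢ(t)/m²(t), where εᵢ(t) = (θ(t) − θ*)ᵀ ζᵢ(t), m(t)² = 1 + ∑ᵢ ζᵢ(t)ᵀζᵢ(t), Γ = Γᵀ ≻ 0 with largest eigenvalue γ₁ ∈ (0,2), the function V(θ̃) = θ̃ᵀ Γ⁻¹ θ̃ with θ̃(t) = θ(t) − θ* satisfies V(θ̃(t+1)) − V(θ̃(t)) ≤ −(2 − γ₁) ∑ᵢ εᵢ(t)²/m²(t) ≤ 0. -/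
/-!
Write `x = θ(t) - θ*` and `w = ∑ εᵢ ζᵢ`, so that the update reads `x⁺ = x - Γ w / m²`. As `Γ⁻¹` is
symmetric, `V⁺ - V = -2 xᵀw / m² + wᵀΓw / m⁴`, where `xᵀw = ∑ εᵢ²`. Cauchy–Schwarz and the bound
on the largest eigenvalue of `Γ` give `wᵀΓw ≤ γ₁ (∑ εᵢ²)(∑ ‖ζᵢ‖²)`, and `∑ ‖ζᵢ‖² ≤ m²` by the
choice of the normalizing signal, so the second term is at most `γ₁ ∑ εᵢ² / m²`.
-/

open Finset Matrix

namespace Matrix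

variable {ι κ R : Type*} [Fintype ι] [Fintype κ]

theorem dotProduct_inv_mulVec_sub_smul_mulVec [DecidableEq ι] [CommRing R]
    {Γ : Matrix ι ι R} (hΓ : Γ.IsSymm) (hdet : IsUnit Γ.det) (x w : ι → R) (c : R) :
    (x - c • Γ *ᵥ w) ⬝ᵥ Γ⁻¹ *ᵥ (x - c • Γ *ᵥ w) =
      x ⬝ᵥ Γ⁻¹ *ᵥ x - 2 * c * (x ⬝ᵥ w) + c ^ 2 * (w ⬝ᵥ Γ *ᵥ w) := by
  have hcancel : Γ⁻¹ *ᵥ Γ *ᵥ w = w := by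
    rw [mulVec_mulVec, nonsing_inv_mul Γ hdet, one_mulVec]
  have hcross : (Γ *ᵥ w) ⬝ᵥ Γ⁻¹ *ᵥ x = x ⬝ᵥ w := by
    rw [dotProduct_mulVec, ← mulVec_transpose, hΓ.inv, hcancel, dotProduct_comm]
  rw [mulVec_sub, mulVec_smul, hcancel]
  simp only [sub_dotProduct, dotProduct_sub, smul_dotProduct, dotProduct_smul, smul_eq_mul,
    hcross, dotProduct_comm (Γ *ᵥ w) w]
  ring

theorem dotProduct_self_sum_smul_le [CommRing R] [LinearOrder R] [IsStrictOrderedRing R]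
    (a : κ → R) (v : κ → ι → R) :
    (∑ i, a i • v i) ⬝ᵥ (∑ i, a i • v i) ≤ (∑ i, a i ^ 2) * ∑ i, v i ⬝ᵥ v i := by
  calc (∑ i, a i • v i) ⬝ᵥ (∑ i, a i • v i) = ∑ k, (∑ i, a i * v i k) ^ 2 := by
        simp only [dotProduct, Finset.sum_apply, Pi.smul_apply, smul_eq_mul, sq]
    _ ≤ ∑ k, (∑ i, a i ^ 2) * ∑ i, v i k ^ 2 :=
        sum_le_sum fun k _ => sum_mul_sq_le_sq_mul_sq _ _ _
    _ = (∑ i, a i ^ 2) * ∑ i, v i ⬝ᵥ v i := by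
        rw [← mul_sum, sum_comm]
        simp only [dotProduct, sq]

end Matrix

theorem neg_two_mul_inv_add_inv_sq_mul_le {R : Type*} [Field R] [LinearOrder R]
    [IsStrictOrderedRing R] {s e γ q : R} (hs : 0 ≤ s) (he : 0 ≤ e) (hγ : 0 ≤ γ)
    (hq : q ≤ γ * (e * s)) :
    -2 * (1 + s)⁻¹ * e + (1 + s)⁻¹ ^ 2 * q ≤ -(2 - γ) * e / (1 + s) := by
  set c := (1 + s)⁻¹
  have hc : 0 < c := inv_pos.mpr (by linarith)
  have hcs : c * s ≤ 1 := by
    have : c * (1 + s) = 1 := inv_mul_cancel₀ (by linarith)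
    linarith
  calc -2 * c * e + c ^ 2 * q ≤ -2 * c * e + c ^ 2 * (γ * (e * s)) := by gcongr
    _ = -2 * c * e + c * γ * e * (c * s) := by ring
    _ ≤ -2 * c * e + c * γ * e * 1 := by gcongr
    _ = -(2 - γ) * e / (1 + s) := by rw [div_eq_mul_inv]; ring

theorem indirect_adaptive_law_V_decrease_general
    (n : ℕ)
    (θ : ℕ → Fin (n + 1) → ℝ) (θs : Fin (n + 1) → ℝ)
    (Γ : Matrix (Fin (n + 1)) (Fin (n + 1)) ℝ)
    (hΓpd : Γ.PosDef)
    (γ1 : ℝ) (hγ1 : γ1 ∈ Set.Ioo (0 : ℝ) 2)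
    (hγ1max : ∀ v : Fin (n + 1) → ℝ, v ⬝ᵥ Γ.mulVec v ≤ γ1 * (v ⬝ᵥ v))
    (ζ : ℕ → Fin n → Fin (n + 1) → ℝ) (ε : ℕ → Fin n → ℝ) (m : ℕ → ℝ)
    (hm : ∀ t, m t = Real.sqrt (1 + ∑ i, ζ t i ⬝ᵥ ζ t i))
    (hε : ∀ t i, ε t i = (θ t - θs) ⬝ᵥ ζ t i)
    (hθ : ∀ t, θ (t + 1) = θ t - (m t ^ 2)⁻¹ • Γ.mulVec (∑ i, ε t i • ζ t i))
    (V : ℕ → ℝ)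
    (hV : ∀ t, V t = (θ t - θs) ⬝ᵥ Γ⁻¹.mulVec (θ t - θs)) :
    ∀ t, V (t + 1) - V t ≤ -(2 - γ1) * (∑ i, (ε t i) ^ 2) / m t ^ 2 ∧
      -(2 - γ1) * (∑ i, (ε t i) ^ 2) / m t ^ 2 ≤ 0 := by
  intro t
  set w := ∑ i, ε t i • ζ t i
  have hE : 0 ≤ ∑ i, ε t i ^ 2 := sum_nonneg fun i _ => sq_nonneg _
  have hS : 0 ≤ ∑ i, ζ t i ⬝ᵥ ζ t i :=
    sum_nonneg fun i _ => sum_nonneg fun k _ => mul_self_nonneg _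
  have hm2 : m t ^ 2 = 1 + ∑ i, ζ t i ⬝ᵥ ζ t i := by rw [hm, Real.sq_sqrt (by positivity)]
  have hxw : (θ t - θs) ⬝ᵥ w = ∑ i, ε t i ^ 2 := by
    simp only [w, dotProduct_sum, dotProduct_smul, ← hε, smul_eq_mul, sq]
  have hΓsymm : Γ.IsSymm := isHermitian_iff_isSymm.mp hΓpd.isHermitian
  have hΔ : V (t + 1) - V t =
      -2 * (m t ^ 2)⁻¹ * ∑ i, ε t i ^ 2 + (m t ^ 2)⁻¹ ^ 2 * (w ⬝ᵥ Γ *ᵥ w) := by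
    rw [hV, hV, hθ, sub_right_comm, dotProduct_inv_mulVec_sub_smul_mulVec hΓsymm
      ((isUnit_iff_isUnit_det Γ).mp hΓpd.isUnit), hxw]
    ring
  have hq : w ⬝ᵥ Γ *ᵥ w ≤ γ1 * ((∑ i, ε t i ^ 2) * ∑ i, ζ t i ⬝ᵥ ζ t i) :=
    (hγ1max w).trans (mul_le_mul_of_nonneg_left (dotProduct_self_sum_smul_le _ _) hγ1.1.le)
  refine ⟨?_, div_nonpos_of_nonpos_of_nonneg ?_ (sq_nonneg _)⟩
  · rw [hΔ, hm2]
    exact neg_two_mul_inv_add_inv_sq_mul_le hS hE hγ1.1.le hq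
  · exact mul_nonpos_of_nonpos_of_nonneg (by linarith [hγ1.2]) hE

theorem indirect_adaptive_law_V_decrease
    (n : ℕ)
    (θ : ℕ → Fin (n + 1) → ℝ) (θs : Fin (n + 1) → ℝ)
    (Γ : Matrix (Fin (n + 1)) (Fin (n + 1)) ℝ)
    (hΓsym : Γ.IsSymm) (hΓpd : Γ.PosDef)
    (γ1 : ℝ) (hγ1 : γ1 ∈ Set.Ioo (0 : ℝ) 2)
    (hγ1max : ∀ v : Fin (n + 1) → ℝ, v ⬝ᵥ Γ.mulVec v ≤ γ1 * (v ⬝ᵥ v))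
    (ζ : ℕ → Fin n → Fin (n + 1) → ℝ) (ε : ℕ → Fin n → ℝ) (m : ℕ → ℝ)
    (hm : ∀ t, m t = Real.sqrt (1 + ∑ i, ζ t i ⬝ᵥ ζ t i))
    (hε : ∀ t i, ε t i = (θ t - θs) ⬝ᵥ ζ t i)
    (hθ : ∀ t, θ (t + 1) = θ t - (m t ^ 2)⁻¹ • Γ.mulVec (∑ i, ε t i • ζ t i))
    (V : ℕ → ℝ)
    (hV : ∀ t, V t = (θ t - θs) ⬝ᵥ Γ⁻¹.mulVec (θ t - θs)) :
    ∀ t, V (t + 1) - V t ≤ -(2 - γ1) * (∑ i, (ε t i) ^ 2) / m t ^ 2 ∧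
      -(2 - γ1) * (∑ i, (ε t i) ^ 2) / m t ^ 2 ≤ 0 :=
  indirect_adaptive_law_V_decrease_general n θ θs Γ hΓpd γ1 hγ1 hγ1max ζ ε m hm hε hθ V hV
end

section
/- Consider the MIMO direct adaptive laws θᵢ(t+1) = θᵢ(t) − sign(ρᵢ*) Γᵢ ∑_{k=1}^n ε_k(t) ζ_{ki}(t)/m²(t) and ρᵢ(t+1) = ρᵢ(t) − γᵢ ∑_{k=1}^n ε_k(t) ξ_{ki}(t)/m²(t) for i = 1,…,M, where ε_k(t) = ∑_{j=1}^M ( ρⱼ* (θⱼ(t) − θⱼ*)ᵀ ζ_{kj}(t) + (ρⱼ(t) − ρⱼ*) ξ_{kj}(t) ), and m(t)² = 1 + ∑_{k=1}^n ∑_{j=1}^M (ζ_{kj}ᵀζ_{kj} + ξ_{kj}²). If the largest eigenvalue of each |ρᵢ*| Γᵢ and each γᵢ lie in (0,2), then V(t) = ∑ᵢ ( |ρᵢ*| (θᵢ − θᵢ*)ᵀ Γᵢ⁻¹ (θᵢ − θᵢ*) + γᵢ⁻¹ (ρᵢ − ρᵢ*)² ) satisfies V(t+1) − V(t) ≤ −(2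 − γ₀) ∑_{k=1}^n ε_k(t)²/m²(t) ≤ 0 for some γ₀ ∈ (0,2). -/
open scoped Matrix
open Finset

/-!
Along the adaptive law, with `vᵢ = ∑ₖ εₖ ζₖᵢ` and `sᵢ = ∑ₖ εₖ ξₖᵢ`, the `i`-th summand of `V`
changes by the cross term `-(2/m²) (ρᵢ* (θᵢ - θᵢ*)ᵀ vᵢ + (ρᵢ - ρᵢ*) sᵢ)` plus the remainder
`(vᵢᵀ |ρᵢ*| Γᵢ vᵢ + γᵢ sᵢ²) / m⁴`: `Γᵢ⁻¹` cancels `Γᵢ`, and `|ρᵢ*| sign ρᵢ* = ρᵢ*`.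
Summed over `i`, the cross terms reassemble into `∑ₖ εₖ²`, while by Cauchy–Schwarz the
remainder is at most `γ₀ (∑ₖ εₖ²) m²`, where `γ₀ < 2` bounds every `λ_max(|ρᵢ*| Γᵢ)` and `γᵢ`.
-/

theorem Real.abs_mul_sign (r : ℝ) : |r| * r.sign = r := by
  rcases lt_trichotomy r 0 with h | rfl | h
  · simp [Real.sign_of_neg h, abs_of_neg h]
  · simp
  · simp [Real.sign_of_pos h, abs_of_pos h]

theorem Real.abs_mul_sign_sq (r : ℝ) : |r| * r.sign ^ 2 = |r| := by
  rcases lt_trichotomy r 0 with h | rfl | h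
  · simp [Real.sign_of_neg h]
  · simp
  · simp [Real.sign_of_pos h]

theorem exists_mem_Ioo_forall_le {ι : Type*} [Fintype ι] {f : ι → ℝ} {a b : ℝ}
    (hab : a < b) (hf : ∀ i, f i < b) : ∃ c ∈ Set.Ioo a b, ∀ i, f i ≤ c := by
  refine ⟨univ.fold max ((a + b) / 2) f, ⟨?_, ?_⟩, fun i => ?_⟩
  · exact (by linarith : a < (a + b) / 2).trans_le ((le_fold_max _).2 (Or.inl le_rfl))
  · exact (fold_max_lt _).2 ⟨by linarith, fun i _ => hf i⟩
  · exact (le_fold_max _).2 (Or.inr ⟨i, mem_univ i, le_rfl⟩)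

namespace Matrix

variable {ι R : Type*} [Fintype ι]

theorem IsSymm.dotProduct_mulVec_comm [CommSemiring R] {A : Matrix ι ι R} (hA : A.IsSymm)
    (a b : ι → R) :
    a ⬝ᵥ A *ᵥ b = b ⬝ᵥ A *ᵥ a := by
  rw [dotProduct_mulVec, ← vecMul_transpose, hA.eq, dotProduct_comm]

theorem IsSymm.dotProduct_inv_mulVec_sub_smul_mulVec [CommRing R] [DecidableEq ι]
    {A : Matrix ι ι R} (hA : A.IsSymm) (hA' : IsUnit A) (a v : ι → R) (c : R) :
    (a - c • A *ᵥ v) ⬝ᵥ A⁻¹ *ᵥ (a - c • A *ᵥ v)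
      = a ⬝ᵥ A⁻¹ *ᵥ a - 2 * c * (a ⬝ᵥ v) + c ^ 2 * (v ⬝ᵥ A *ᵥ v) := by
  have hinv : A⁻¹ *ᵥ (A *ᵥ v) = v := by
    rw [mulVec_mulVec, nonsing_inv_mul A ((isUnit_iff_isUnit_det A).1 hA'), one_mulVec]
  have hswap : (A *ᵥ v) ⬝ᵥ A⁻¹ *ᵥ a = a ⬝ᵥ v := by
    rw [hA.inv.dotProduct_mulVec_comm, hinv]
  simp only [mulVec_sub, mulVec_smul, sub_dotProduct, dotProduct_sub, smul_dotProduct,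
    dotProduct_smul, smul_eq_mul, hinv, hswap, dotProduct_comm (A *ᵥ v) v]
  ring

end Matrix

section AdaptiveLaw

variable {ι κ ν : Type*} [Fintype ι] [Fintype κ] [Fintype ν]

theorem abs_mul_dotProduct_inv_mulVec_gradient_step_sub [DecidableEq ν] {Γ : Matrix ν ν ℝ}
    (hΓ : Γ.PosDef) (r μ : ℝ) (e v : ν → ℝ) :
    |r| * ((e - (r.sign / μ) • Γ *ᵥ v) ⬝ᵥ Γ⁻¹ *ᵥ (e - (r.sign / μ) • Γ *ᵥ v))
        - |r| * (e ⬝ᵥ Γ⁻¹ *ᵥ e)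
      = -(2 / μ) * (r * (e ⬝ᵥ v)) + (v ⬝ᵥ (|r| • Γ) *ᵥ v) / μ ^ 2 := by
  have hsymm : Γ.IsSymm := Matrix.isHermitian_iff_isSymm.1 hΓ.isHermitian
  rw [hsymm.dotProduct_inv_mulVec_sub_smul_mulVec hΓ.isUnit, Matrix.smul_mulVec,
    dotProduct_smul, smul_eq_mul]
  linear_combination (-2 * (e ⬝ᵥ v) / μ) * r.abs_mul_sign
    + ((v ⬝ᵥ Γ *ᵥ v) / μ ^ 2) * r.abs_mul_sign_sq

theorem inv_mul_gradient_step_sq_sub {γ : ℝ} (hγ : γ ≠ 0) (r s μ : ℝ) :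
    γ⁻¹ * (r - γ * s / μ) ^ 2 - γ⁻¹ * r ^ 2 = -(2 / μ) * (r * s) + γ * s ^ 2 / μ ^ 2 := by
  linear_combination (-2 * r * s / μ + γ * s ^ 2 / μ ^ 2) * inv_mul_cancel₀ hγ

-- `V` in the parameter errors `e = θ - θ*`, `r = ρ - ρ*`.
noncomputable def lyapunov [DecidableEq ν] (ρs : ι → ℝ) (Γ : ι → Matrix ν ν ℝ) (γ : ι → ℝ)
    (e : ι → ν → ℝ) (r : ι → ℝ) : ℝ :=
  ∑ i, (|ρs i| * (e i ⬝ᵥ (Γ i)⁻¹ *ᵥ e i) + (γ i)⁻¹ * r i ^ 2)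

theorem lyapunov_gradient_step_sub [DecidableEq ν] {ρs γ : ι → ℝ} {Γ : ι → Matrix ν ν ℝ}
    (hΓ : ∀ i, (Γ i).PosDef) (hγ : ∀ i, γ i ≠ 0) (μ : ℝ) (e v : ι → ν → ℝ) (r s : ι → ℝ) :
    lyapunov ρs Γ γ (fun i => e i - ((ρs i).sign / μ) • Γ i *ᵥ v i)
        (fun i => r i - γ i * s i / μ) - lyapunov ρs Γ γ e r
      = -(2 / μ) * ∑ i, (ρs i * (e i ⬝ᵥ v i) + r i * s i)
        + (∑ i, (v i ⬝ᵥ (|ρs i| • Γ i) *ᵥ v i + γ i * s i ^ 2)) / μ ^ 2 := by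
  simp only [lyapunov, ← sum_sub_distrib, mul_sum, sum_div, ← sum_add_distrib]
  refine sum_congr rfl fun i _ => ?_
  linear_combination abs_mul_dotProduct_inv_mulVec_gradient_step_sub (hΓ i) (ρs i) μ (e i) (v i)
    + inv_mul_gradient_step_sq_sub (hγ i) (r i) (s i) μ

theorem sum_dotProduct_sum_smul_add_mul_sum (c d : ι → ℝ) (e : ι → ν → ℝ) (ε : κ → ℝ)
    (ζ : κ → ι → ν → ℝ) (ξ : κ → ι → ℝ) :
    ∑ i, (c i * (e i ⬝ᵥ ∑ k, ε k • ζ k i) + d i * ∑ k, ε k * ξ k i)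
      = ∑ k, ε k * ∑ i, (c i * (e i ⬝ᵥ ζ k i) + d i * ξ k i) := by
  simp only [dotProduct_sum, dotProduct_smul, smul_eq_mul, mul_sum, ← sum_add_distrib]
  rw [sum_comm]
  refine sum_congr rfl fun k _ => sum_congr rfl fun i _ => ?_
  ring

theorem dotProduct_self_sum_smul_le (ε : κ → ℝ) (w : κ → ν → ℝ) :
    (∑ k, ε k • w k) ⬝ᵥ (∑ k, ε k • w k) ≤ (∑ k, ε k ^ 2) * ∑ k, w k ⬝ᵥ w k := by
  simp only [dotProduct, Finset.sum_apply, Pi.smul_apply, smul_eq_mul, ← sq]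
  rw [sum_comm (f := fun k j => w k j ^ 2), mul_sum]
  exact sum_le_sum fun j _ => sum_mul_sq_le_sq_mul_sq _ _ _

theorem sum_quadratic_remainder_le {A : ι → Matrix ν ν ℝ} {a γ : ι → ℝ} {c : ℝ}
    (hA : ∀ i v, v ⬝ᵥ A i *ᵥ v ≤ a i * (v ⬝ᵥ v)) (ha : ∀ i, a i ≤ c) (hγ : ∀ i, γ i ≤ c)
    (hc : 0 ≤ c) (ε : κ → ℝ) (ζ : κ → ι → ν → ℝ) (ξ : κ → ι → ℝ) :
    ∑ i, ((∑ k, ε k • ζ k i) ⬝ᵥ A i *ᵥ ∑ k, ε k • ζ k i + γ i * (∑ k, ε k * ξ k i) ^ 2)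
      ≤ c * (∑ k, ε k ^ 2) * ∑ k, ∑ i, (ζ k i ⬝ᵥ ζ k i + ξ k i ^ 2) := by
  rw [sum_comm, mul_sum]
  refine sum_le_sum fun i _ => ?_
  set v := ∑ k, ε k • ζ k i
  set s := ∑ k, ε k * ξ k i
  have hv : 0 ≤ v ⬝ᵥ v := sum_nonneg fun _ _ => mul_self_nonneg _
  calc v ⬝ᵥ A i *ᵥ v + γ i * s ^ 2 ≤ c * (v ⬝ᵥ v) + c * s ^ 2 := by
        gcongr
        exacts [(hA i v).trans (by gcongr; exact ha i), hγ i]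
    _ ≤ c * ((∑ k, ε k ^ 2) * ∑ k, ζ k i ⬝ᵥ ζ k i)
          + c * ((∑ k, ε k ^ 2) * ∑ k, ξ k i ^ 2) := by
        gcongr
        exacts [dotProduct_self_sum_smul_le ε (ζ · i), sum_mul_sq_le_sq_mul_sq _ _ _]
    _ = c * (∑ k, ε k ^ 2) * ∑ k, (ζ k i ⬝ᵥ ζ k i + ξ k i ^ 2) := by
        rw [sum_add_distrib]; ring

end AdaptiveLaw

theorem neg_two_div_mul_add_div_sq_le {μ E Q c : ℝ} (hμ : 0 < μ) (hQ : Q ≤ c * E * μ) :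
    -(2 / μ) * E + Q / μ ^ 2 ≤ -(2 - c) * E / μ := by
  have hQ' : Q / μ ^ 2 ≤ c * E / μ :=
    (div_le_div_of_nonneg_right hQ (by positivity)).trans_eq (by field_simp)
  calc -(2 / μ) * E + Q / μ ^ 2 ≤ -(2 / μ) * E + c * E / μ := by gcongr
    _ = -(2 - c) * E / μ := by ring

theorem mimo_direct_adaptive_V_decrease_general
    (n M : ℕ)
    (ρs : Fin M → ℝ)
    (θ : Fin M → ℕ → Fin (n + M) → ℝ) (θs : Fin M → Fin (n + M) → ℝ)
    (ρ : Fin M → ℕ → ℝ)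
    (Γ : Fin M → Matrix (Fin (n + M)) (Fin (n + M)) ℝ)
    (hΓpd : ∀ i, (Γ i).PosDef)
    (γ γmax : Fin M → ℝ)
    (hγ : ∀ i, γ i ∈ Set.Ioo (0 : ℝ) 2)
    (hγmax : ∀ i, γmax i ∈ Set.Ioo (0 : ℝ) 2)
    (hγmaxI : ∀ i, ∀ v : Fin (n + M) → ℝ,
      v ⬝ᵥ (|ρs i| • Γ i).mulVec v ≤ γmax i * (v ⬝ᵥ v))
    (ζ : ℕ → Fin n → Fin M → Fin (n + M) → ℝ)
    (ξ : ℕ → Fin n → Fin M → ℝ) (ε : ℕ → Fin n → ℝ) (m : ℕ → ℝ)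
    (hm : ∀ t, m t = Real.sqrt
      (1 + ∑ k, ∑ j, (ζ t k j ⬝ᵥ ζ t k j + (ξ t k j) ^ 2)))
    (hε : ∀ t k, ε t k = ∑ j,
      (ρs j * ((θ j t - θs j) ⬝ᵥ ζ t k j) + (ρ j t - ρs j) * ξ t k j))
    (hθ : ∀ i t, θ i (t + 1) =
      θ i t - (Real.sign (ρs i) / m t ^ 2) • (Γ i).mulVec (∑ k, ε t k • ζ t k i))
    (hρ : ∀ i t, ρ i (t + 1) = ρ i t - γ i * (∑ k, ε t k * ξ t k i) / m t ^ 2)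
    (V : ℕ → ℝ)
    (hV : ∀ t, V t = ∑ i,
      (|ρs i| * ((θ i t - θs i) ⬝ᵥ (Γ i)⁻¹.mulVec (θ i t - θs i)) +
        (γ i)⁻¹ * (ρ i t - ρs i) ^ 2)) :
    ∃ γ0 ∈ Set.Ioo (0 : ℝ) 2, ∀ t,
      V (t + 1) - V t ≤ -(2 - γ0) * (∑ k, (ε t k) ^ 2) / m t ^ 2 ∧
        -(2 - γ0) * (∑ k, (ε t k) ^ 2) / m t ^ 2 ≤ 0 := by
  obtain ⟨γ0, hγ0, hγ0_ge⟩ := exists_mem_Ioo_forall_le two_pos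
    (f := fun i => max (γmax i) (γ i)) fun i => max_lt (hγmax i).2 (hγ i).2
  refine ⟨γ0, hγ0, fun t => ?_⟩
  have hS : 0 ≤ ∑ k, ∑ j, (ζ t k j ⬝ᵥ ζ t k j + ξ t k j ^ 2) := sum_nonneg fun _ _ =>
    sum_nonneg fun _ _ => add_nonneg (sum_nonneg fun _ _ => mul_self_nonneg _) (sq_nonneg _)
  have hm2 : m t ^ 2 = 1 + ∑ k, ∑ j, (ζ t k j ⬝ᵥ ζ t k j + ξ t k j ^ 2) := by
    rw [hm, Real.sq_sqrt (by linarith)]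
  have hE : 0 ≤ ∑ k, ε t k ^ 2 := by positivity
  have hVt : ∀ u, V u = lyapunov ρs Γ γ (fun i => θ i u - θs i) (fun i => ρ i u - ρs i) := hV
  have hθ' : (fun i => θ i (t + 1) - θs i) = fun i =>
      (θ i t - θs i) - ((ρs i).sign / m t ^ 2) • Γ i *ᵥ ∑ k, ε t k • ζ t k i :=
    funext fun i => by rw [hθ, sub_right_comm]
  have hρ' : (fun i => ρ i (t + 1) - ρs i) = fun i =>
      (ρ i t - ρs i) - γ i * (∑ k, ε t k * ξ t k i) / m t ^ 2 :=
    funext fun i => by rw [hρ, sub_right_comm]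
  have hQ := sum_quadratic_remainder_le hγmaxI (fun i => (le_max_left _ _).trans (hγ0_ge i))
    (fun i => (le_max_right _ _).trans (hγ0_ge i)) hγ0.1.le (ε t) (ζ t) (ξ t)
  rw [hVt, hVt, hθ', hρ', lyapunov_gradient_step_sub hΓpd (fun i => (hγ i).1.ne'),
    sum_dotProduct_sum_smul_add_mul_sum]
  simp_rw [← hε, ← sq]
  refine ⟨neg_two_div_mul_add_div_sq_le (by rw [hm2]; linarith) (hQ.trans ?_), ?_⟩
  · rw [hm2]
    exact mul_le_mul_of_nonneg_left (by linarith) (mul_nonneg hγ0.1.le hE)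
  · exact div_nonpos_of_nonpos_of_nonneg
      (mul_nonpos_of_nonpos_of_nonneg (by linarith [hγ0.2]) hE) (sq_nonneg _)

theorem mimo_direct_adaptive_V_decrease
    (n M : ℕ)
    (ρs : Fin M → ℝ) (hρs : ∀ i, ρs i ≠ 0)
    (θ : Fin M → ℕ → Fin (n + M) → ℝ) (θs : Fin M → Fin (n + M) → ℝ)
    (ρ : Fin M → ℕ → ℝ)
    (Γ : Fin M → Matrix (Fin (n + M)) (Fin (n + M)) ℝ)
    (hΓsym : ∀ i, (Γ i).IsSymm) (hΓpd : ∀ i, (Γ i).PosDef)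
    (γ γmax : Fin M → ℝ)
    (hγ : ∀ i, γ i ∈ Set.Ioo (0 : ℝ) 2)
    (hγmax : ∀ i, γmax i ∈ Set.Ioo (0 : ℝ) 2)
    (hγmaxI : ∀ i, ∀ v : Fin (n + M) → ℝ,
      v ⬝ᵥ (|ρs i| • Γ i).mulVec v ≤ γmax i * (v ⬝ᵥ v))
    (ζ : ℕ → Fin n → Fin M → Fin (n + M) → ℝ)
    (ξ : ℕ → Fin n → Fin M → ℝ) (ε : ℕ → Fin n → ℝ) (m : ℕ → ℝ)
    (hm : ∀ t, m t = Real.sqrt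
      (1 + ∑ k, ∑ j, (ζ t k j ⬝ᵥ ζ t k j + (ξ t k j) ^ 2)))
    (hε : ∀ t k, ε t k = ∑ j,
      (ρs j * ((θ j t - θs j) ⬝ᵥ ζ t k j) + (ρ j t - ρs j) * ξ t k j))
    (hθ : ∀ i t, θ i (t + 1) =
      θ i t - (Real.sign (ρs i) / m t ^ 2) • (Γ i).mulVec (∑ k, ε t k • ζ t k i))
    (hρ : ∀ i t, ρ i (t + 1) = ρ i t - γ i * (∑ k, ε t k * ξ t k i) / m t ^ 2)
    (V : ℕ → ℝ)
    (hV : ∀ t, V t = ∑ i,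
      (|ρs i| * ((θ i t - θs i) ⬝ᵥ (Γ i)⁻¹.mulVec (θ i t - θs i)) +
        (γ i)⁻¹ * (ρ i t - ρs i) ^ 2)) :
    ∃ γ0 ∈ Set.Ioo (0 : ℝ) 2, ∀ t,
      V (t + 1) - V t ≤ -(2 - γ0) * (∑ k, (ε t k) ^ 2) / m t ^ 2 ∧
        -(2 - γ0) * (∑ k, (ε t k) ^ 2) / m t ^ 2 ≤ 0 :=
  mimo_direct_adaptive_V_decrease_general n M ρs θ θs ρ Γ hΓpd γ γmax hγ hγmax hγmaxI ζ ξ ε m hm hε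
    hθ hρ V hV
end
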